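/- Let ρ > 0 be a real number, q = ⌊ρ⌋, and let μ be a positive Borel measure on ℂ whose support does not contain 0 and whose counting function μ^rad has finite type at order ρ. Then for every r ≥ 0 one has ∫_0^∞ (r/t) 𝓜_q'(r/t) dN_μ(t) = ∫_0^∞ N_μ(r/t) d(t 𝓜_q'(t)), where both sides are Lebesgue–Stieltjes integrals with respect to the increasing functions N_μ and t ↦ t𝓜_q'(t) respectively, and 𝓜_q' denotes the right derivative of 𝓜_q. -/

import Mathlib

open MeasureTheory Filter

/-- The Weierstrass primary kernel of genus `q`:
`K_q(z) = ln |1 - z| + ∑_{k=1}^q Re (z^k / k)`. -/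
noncomputable def weierstrassKernel (q : ℕ) (z : ℂ) : ℝ :=
  Real.log ‖1 - z‖ + ∑ k ∈ Finset.Icc 1 q, (z ^ k / (k : ℂ)).re

/-- `𝓜_q(r) = max_{|z| = r} K_q(z)`. -/
noncomputable def maxKernel (q : ℕ) (r : ℝ) : ℝ :=
  sSup (weierstrassKernel q '' Metric.sphere (0 : ℂ) r)

/-- The right derivative `𝓜_q'` of `𝓜_q`. -/
noncomputable def maxKernelDeriv (q : ℕ) (t : ℝ) : ℝ :=
  derivWithin (maxKernel q) (Set.Ici t) t

/-- The counting function `μ^rad(t) = μ {z : |z| ≤ t}` of a measure on `ℂ`. -/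
noncomputable def countingFun (μ : Measure ℂ) (t : ℝ) : ℝ :=
  (μ (Metric.closedBall 0 t)).toReal

/-- The averaged counting function `N_μ(t) = ∫_0^t μ^rad(s)/s ds`. -/
noncomputable def avgCountingFun (μ : Measure ℂ) (t : ℝ) : ℝ :=
  ∫ s in (0:ℝ)..t, countingFun μ s / s

/-- `μ^rad` has finite type at order `ρ`: `limsup_{t→∞} μ^rad(t)/t^ρ < ∞`
(stated in `ℝ≥0∞`, which in particular forces `μ` to be finite on closed balls). -/
def HasFiniteType (μ : Measure ℂ) (ρ : ℝ) : Prop :=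
  Filter.limsup (fun t : ℝ => μ (Metric.closedBall 0 t) / ENNReal.ofReal (t ^ ρ))
    Filter.atTop < ⊤

/-- The support of `μ` does not contain `0`, i.e. `μ` vanishes near `0`. -/
def SuppAvoidsZero (μ : Measure ℂ) : Prop :=
  ∃ ε > 0, μ (Metric.ball (0 : ℂ) ε) = 0

/-- The canonical Hadamard–Weierstrass integral `U_q^μ(z) = ∫_ℂ K_q(z/w) dμ(w)`. -/
noncomputable def hwIntegral (q : ℕ) (μ : Measure ℂ) (z : ℂ) : ℝ :=
  ∫ w, weierstrassKernel q (z / w) ∂μ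

/-- The maximum of `U_q^μ` on the circle `|z| = r`. -/
noncomputable def hwMax (q : ℕ) (μ : Measure ℂ) (r : ℝ) : ℝ :=
  sSup (hwIntegral q μ '' Metric.sphere (0 : ℂ) r)

/-!
Both sides are the integral of `μ^rad(s)/s` against `ds ⊗ dG(t)` over `{s, t > 0, t s ≤ r}`,
taken in the two orders. This needs `G 0 = 0`, i.e. `t 𝓜_q'(t) → 0` as `t → 0⁺`. Near `0`,
`𝓜_q(t) = O(t^{q+1})` because `K_q(z) = Re (log (1 - z) + ∑_{k ≤ q} z^k/k)` is a Taylor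
remainder, and `𝓜_q` is increasing on `[0, 1)` by the maximum modulus principle applied to the
Weierstrass factor `E_q` with `K_q = log |E_q|`; as `t 𝓜_q'(t)` is increasing,
`t 𝓜_q'(t) / 2 ≤ ∫_t^{2t} 𝓜_q' ≤ 𝓜_q(2t) - 𝓜_q(t)`.
-/

open Set Topology

open scoped ENNReal

section Kernel

variable {q : ℕ} {r : ℝ} {z : ℂ}

noncomputable def weierstrassFactor (q : ℕ) (z : ℂ) : ℂ :=
  (1 - z) * Complex.exp (∑ k ∈ Finset.Icc 1 q, z ^ k / (k : ℂ))

lemma exp_weierstrassKernel (hz : z ≠ 1) :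
    Real.exp (weierstrassKernel q z) = ‖weierstrassFactor q z‖ := by
  rw [weierstrassKernel, Real.exp_add, Real.exp_log (norm_pos_iff.2 (sub_ne_zero.2 hz.symm)),
    weierstrassFactor, norm_mul, Complex.norm_exp, Complex.re_sum]

lemma weierstrassKernel_eq_re_log (q : ℕ) (z : ℂ) :
    weierstrassKernel q z
      = (Complex.log (1 - z) + ∑ k ∈ Finset.Icc 1 q, z ^ k / (k : ℂ)).re := by
  rw [weierstrassKernel, Complex.add_re, Complex.log_re, Complex.re_sum]

lemma logTaylor_succ_neg (q : ℕ) (z : ℂ) :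
    Complex.logTaylor (q + 1) (-z) = -∑ k ∈ Finset.Icc 1 q, z ^ k / (k : ℂ) := by
  have hrange : Finset.range (q + 1) = insert 0 (Finset.Icc 1 q) := by
    ext j; simp only [Finset.mem_range, Finset.mem_insert, Finset.mem_Icc]; omega
  rw [Complex.logTaylor, hrange, Finset.sum_insert (by simp), ← Finset.sum_neg_distrib]
  simp only [pow_zero, Nat.cast_zero, div_zero, zero_add]
  refine Finset.sum_congr rfl fun k _ => ?_
  have hodd : Odd (k + 1 + k) := ⟨k, by ring⟩
  rw [neg_pow z k, ← mul_assoc, ← pow_add, hodd.neg_one_pow]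
  ring

lemma abs_weierstrassKernel_le (hz : ‖z‖ ≤ 1 / 2) :
    |weierstrassKernel q z| ≤ 2 * ‖z‖ ^ (q + 1) := by
  have hlog := Complex.norm_log_sub_logTaylor_le q (z := -z) (by rw [norm_neg]; linarith)
  rw [logTaylor_succ_neg, sub_neg_eq_add, ← sub_eq_add_neg, norm_neg] at hlog
  have hinv : (1 - ‖z‖)⁻¹ ≤ 2 := by rw [inv_le_comm₀ (by linarith) two_pos]; linarith
  have hq : (1 : ℝ) ≤ q + 1 := by linarith [q.cast_nonneg (α := ℝ)]
  rw [weierstrassKernel_eq_re_log]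
  calc _ ≤ ‖Complex.log (1 - z) + ∑ k ∈ Finset.Icc 1 q, z ^ k / (k : ℂ)‖ :=
        Complex.abs_re_le_norm _
    _ ≤ ‖z‖ ^ (q + 1) * (1 - ‖z‖)⁻¹ / (q + 1) := by exact_mod_cast hlog
    _ ≤ ‖z‖ ^ (q + 1) * (1 - ‖z‖)⁻¹ :=
        div_le_self (mul_nonneg (by positivity) (inv_nonneg.2 (by linarith))) hq
    _ ≤ 2 * ‖z‖ ^ (q + 1) := by rw [mul_comm 2]; gcongr

lemma continuousAt_weierstrassKernel (hz : z ≠ 1) :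
    ContinuousAt (weierstrassKernel q) z := by
  have hlog : ContinuousAt (fun w : ℂ => Real.log ‖1 - w‖) z :=
    (continuous_norm.comp (continuous_const.sub continuous_id)).continuousAt.log
      (norm_ne_zero_iff.2 (sub_ne_zero.2 hz.symm))
  exact hlog.add (continuous_finsetSum _ fun k _ =>
    Complex.continuous_re.comp ((continuous_pow k).div_const _)).continuousAt

lemma ne_one_of_norm_lt_one (hz : ‖z‖ < 1) : z ≠ 1 := by
  rintro rfl
  simp at hz

lemma ne_one_of_mem_sphere_of_lt_one (hr : r < 1) (hz : z ∈ Metric.sphere (0 : ℂ) r) : z ≠ 1 :=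
  ne_one_of_norm_lt_one ((mem_sphere_zero_iff_norm.1 hz).trans_lt hr)

lemma exists_isMaxOn_weierstrassKernel_sphere (hr0 : 0 ≤ r) (hr1 : r < 1) :
    ∃ z ∈ Metric.sphere (0 : ℂ) r, IsMaxOn (weierstrassKernel q) (Metric.sphere 0 r) z :=
  (isCompact_sphere 0 r).exists_isMaxOn (NormedSpace.sphere_nonempty.2 hr0)
    fun _ hz =>
      (continuousAt_weierstrassKernel (ne_one_of_mem_sphere_of_lt_one hr1 hz)).continuousWithinAt

lemma maxKernel_eq_of_isMaxOn (hz : z ∈ Metric.sphere (0 : ℂ) r)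
    (hmax : IsMaxOn (weierstrassKernel q) (Metric.sphere 0 r) z) :
    maxKernel q r = weierstrassKernel q z :=
  IsGreatest.csSup_eq ⟨mem_image_of_mem _ hz, by rintro _ ⟨w, hw, rfl⟩; exact hmax hw⟩

lemma weierstrassKernel_le_maxKernel (hz : ‖z‖ ≤ r) (hr : r < 1) :
    weierstrassKernel q z ≤ maxKernel q r := by
  have hr0 : 0 ≤ r := (norm_nonneg z).trans hz
  obtain ⟨w, hw, hmax⟩ := exists_isMaxOn_weierstrassKernel_sphere (q := q) hr0 hr
  rw [maxKernel_eq_of_isMaxOn hw hmax]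
  rcases hr0.eq_or_lt with rfl | hr0
  · exact hmax (mem_sphere_zero_iff_norm.2 (le_antisymm hz (norm_nonneg z)))
  have hfrontier : ∀ u ∈ frontier (Metric.ball (0 : ℂ) r),
      ‖weierstrassFactor q u‖ ≤ Real.exp (weierstrassKernel q w) := by
    intro u hu
    rw [frontier_ball 0 hr0.ne'] at hu
    rw [← exp_weierstrassKernel (ne_one_of_mem_sphere_of_lt_one hr hu)]
    exact Real.exp_le_exp.2 (hmax hu)
  have hdiff : Differentiable ℂ (weierstrassFactor q) := by
    unfold weierstrassFactor; fun_prop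
  have hzmem : z ∈ closure (Metric.ball (0 : ℂ) r) := by
    rwa [closure_ball 0 hr0.ne', mem_closedBall_zero_iff]
  rw [← Real.exp_le_exp, exp_weierstrassKernel (ne_one_of_norm_lt_one (hz.trans_lt hr))]
  exact Complex.norm_le_of_forall_mem_frontier_norm_le Metric.isBounded_ball hdiff.diffContOnCl
    hfrontier hzmem

lemma monotoneOn_maxKernel (q : ℕ) : MonotoneOn (maxKernel q) (Ico 0 1) := by
  rintro r₁ ⟨h₁, -⟩ r₂ ⟨-, h₂⟩ hle
  obtain ⟨z, hz, hmax⟩ := exists_isMaxOn_weierstrassKernel_sphere (q := q) h₁ (hle.trans_lt h₂)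
  rw [maxKernel_eq_of_isMaxOn hz hmax]
  exact weierstrassKernel_le_maxKernel ((mem_sphere_zero_iff_norm.1 hz).trans_le hle) h₂

lemma abs_maxKernel_le (hr0 : 0 ≤ r) (hr : r ≤ 1 / 2) : |maxKernel q r| ≤ 2 * r ^ (q + 1) := by
  obtain ⟨z, hz, hmax⟩ := exists_isMaxOn_weierstrassKernel_sphere (q := q) hr0 (by linarith)
  rw [maxKernel_eq_of_isMaxOn hz hmax, ← mem_sphere_zero_iff_norm.1 hz]
  exact abs_weierstrassKernel_le (by rwa [mem_sphere_zero_iff_norm.1 hz])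

lemma tendsto_maxKernel_nhdsGT_zero (q : ℕ) : Tendsto (maxKernel q) (𝓝[>] 0) (𝓝 0) := by
  have hbound : Tendsto (fun t : ℝ => 2 * t ^ (q + 1)) (𝓝[>] 0) (𝓝 0) :=
    ((by fun_prop : Continuous fun t : ℝ => 2 * t ^ (q + 1)).tendsto' 0 0 (by simp)).mono_left
      nhdsWithin_le_nhds
  refine squeeze_zero_norm' ?_ hbound
  filter_upwards [Ioc_mem_nhdsGT (by norm_num : (0 : ℝ) < 1 / 2)] with t ht
  exact abs_maxKernel_le ht.1.le ht.2

end Kernel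

section Derivative

variable {q : ℕ}

lemma maxKernelDeriv_nonneg {t : ℝ} (ht0 : 0 ≤ t) (ht1 : t < 1) : 0 ≤ maxKernelDeriv q t := by
  rw [maxKernelDeriv, ← derivWithin_inter (Iio_mem_nhds ht1)]
  exact ((monotoneOn_maxKernel q).mono fun x hx => ⟨ht0.trans hx.1, hx.2⟩).derivWithin_nonneg

lemma le_two_mul_maxKernel_sub {F : ℝ → ℝ} (hF : MonotoneOn F (Ioi 0))
    (hFeq : ∀ t > 0, F t = t * maxKernelDeriv q t) {a : ℝ} (ha : 0 < a) (ha1 : 2 * a < 1) :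
    F a ≤ 2 * (maxKernel q (2 * a) - maxKernel q a) := by
  have hmono : MonotoneOn (maxKernel q) (uIcc a (2 * a)) := by
    refine (monotoneOn_maxKernel q).mono ?_
    rw [uIcc_of_le (by linarith)]
    exact Icc_subset_Ico ha.le ha1
  have hlower :
      ∀ᵐ x ∂volume.restrict (Icc a (2 * a)), F a / (2 * a) ≤ deriv (maxKernel q) x := by
    have hmono' := hmono.mono (Ioo_subset_Icc_self.trans Icc_subset_uIcc)
    rw [Measure.restrict_congr_set Ioo_ae_eq_Icc.symm, ae_restrict_iff' measurableSet_Ioo]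
    filter_upwards [hmono'.ae_differentiableWithinAt_of_mem] with x hdiff hx
    have hderiv : maxKernelDeriv q x = deriv (maxKernel q) x :=
      ((hdiff hx).differentiableAt (Ioo_mem_nhds hx.1 hx.2)).hasDerivAt.hasDerivWithinAt
        |>.derivWithin (uniqueDiffWithinAt_Ici x)
    have hx0 : 0 < x := ha.trans hx.1
    rw [div_le_iff₀ (by linarith), ← hderiv]
    calc F a ≤ F x := hF ha hx0 hx.1.le
      _ = x * maxKernelDeriv q x := hFeq x hx0
      _ ≤ 2 * a * maxKernelDeriv q x :=
        mul_le_mul_of_nonneg_right hx.2.le (maxKernelDeriv_nonneg hx0.le (by linarith [hx.2]))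
      _ = maxKernelDeriv q x * (2 * a) := mul_comm _ _
  have hint := intervalIntegral.integral_mono_ae_restrict (by linarith) intervalIntegrable_const
    hmono.intervalIntegrable_deriv hlower
  have hupper := hmono.intervalIntegral_deriv_mem_uIcc
  rw [uIcc_of_le (sub_nonneg.2 (hmono left_mem_uIcc right_mem_uIcc (by linarith)))] at hupper
  rw [intervalIntegral.integral_const, smul_eq_mul] at hint
  have : (2 * a - a) * (F a / (2 * a)) = F a / 2 := by field_simp; ring
  linarith [hupper.2]

lemma tendsto_nhdsGT_zero_of_eq_mul_maxKernelDeriv {F : ℝ → ℝ} (hF : MonotoneOn F (Ioi 0))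
    (hFeq : ∀ t > 0, F t = t * maxKernelDeriv q t) : Tendsto F (𝓝[>] 0) (𝓝 0) := by
  have hdouble : Tendsto (fun t : ℝ => 2 * t) (𝓝[>] 0) (𝓝[>] 0) :=
    tendsto_iff_comap.2 (comap_mulLeft_nhdsGT_zero two_pos).ge
  have hupper : Tendsto (fun t => 2 * (maxKernel q (2 * t) - maxKernel q t)) (𝓝[>] 0) (𝓝 0) := by
    simpa using (((tendsto_maxKernel_nhdsGT_zero q).comp hdouble).sub
      (tendsto_maxKernel_nhdsGT_zero q)).const_mul 2
  refine tendsto_of_tendsto_of_tendsto_of_le_of_le' tendsto_const_nhds hupper ?_ ?_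
  · filter_upwards [Ioo_mem_nhdsGT (by norm_num : (0 : ℝ) < 1)] with t ht
    rw [hFeq t ht.1]
    exact mul_nonneg ht.1.le (maxKernelDeriv_nonneg ht.1.le ht.2)
  · filter_upwards [Ioo_mem_nhdsGT (by norm_num : (0 : ℝ) < 1 / 2)] with t ht
    exact le_two_mul_maxKernel_sub hF hFeq ht.1 (by linarith [ht.2])

lemma StieltjesFunction.apply_zero_of_eq_mul_maxKernelDeriv {G : StieltjesFunction ℝ}
    (hG : ∀ t > 0, G t = t * maxKernelDeriv q t) : G 0 = 0 :=
  tendsto_nhds_unique ((G.right_continuous 0).mono_left (nhdsWithin_mono 0 Ioi_subset_Ici_self))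
    (tendsto_nhdsGT_zero_of_eq_mul_maxKernelDeriv (G.mono.monotoneOn _) hG)

end Derivative

section Counting

variable {μ : Measure ℂ}

lemma HasFiniteType.isFiniteMeasureOnCompacts {ρ : ℝ} (hft : HasFiniteType μ ρ) :
    IsFiniteMeasureOnCompacts μ := by
  refine ⟨fun K hK => ?_⟩
  obtain ⟨R, hR⟩ := hK.isBounded.subset_closedBall 0
  obtain ⟨T, hT, hRT⟩ := ((eventually_lt_of_limsup_lt hft).and (eventually_ge_atTop R)).exists
  refine (measure_mono (hR.trans (Metric.closedBall_subset_closedBall hRT))).trans_lt ?_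
  by_contra htop
  rw [not_lt, top_le_iff] at htop
  rw [htop, ENNReal.top_div_of_ne_top ENNReal.ofReal_ne_top] at hT
  exact lt_irrefl _ hT

lemma countingFun_nonneg (μ : Measure ℂ) (t : ℝ) : 0 ≤ countingFun μ t := ENNReal.toReal_nonneg

lemma monotone_countingFun [IsFiniteMeasureOnCompacts μ] : Monotone (countingFun μ) :=
  fun _ b hab => ENNReal.toReal_mono (measure_closedBall_lt_top (x := 0) (r := b)).ne
    (measure_mono (Metric.closedBall_subset_closedBall hab))

lemma countingFun_eq_zero_of_lt {ε s : ℝ} (hμ : μ (Metric.ball 0 ε) = 0) (hs : s < ε) :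
    countingFun μ s = 0 := by
  rw [countingFun, measure_mono_null (Metric.closedBall_subset_ball hs) hμ, ENNReal.toReal_zero]

lemma SuppAvoidsZero.integrableOn_countingFun_div [IsFiniteMeasureOnCompacts μ]
    (hsupp : SuppAvoidsZero μ) (a b : ℝ) :
    IntegrableOn (fun s => countingFun μ s / s) (Icc a b) := by
  obtain ⟨ε, hε, hμ⟩ := hsupp
  refine Measure.integrableOn_of_bounded (M := countingFun μ b / ε) measure_Icc_lt_top.ne
    (monotone_countingFun.measurable.div measurable_id).aestronglyMeasurable ?_
  rw [ae_restrict_iff' measurableSet_Icc]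
  refine ae_of_all _ fun s hs => ?_
  rcases lt_or_ge s ε with hsε | hεs
  · rw [countingFun_eq_zero_of_lt hμ hsε, zero_div, norm_zero]
    exact div_nonneg (countingFun_nonneg μ b) hε.le
  · rw [Real.norm_of_nonneg (div_nonneg (countingFun_nonneg μ s) (hε.le.trans hεs))]
    exact div_le_div₀ (countingFun_nonneg μ b) (monotone_countingFun hs.2) hε hεs

lemma SuppAvoidsZero.intervalIntegrable_countingFun_div [IsFiniteMeasureOnCompacts μ]
    (hsupp : SuppAvoidsZero μ) (a b : ℝ) :
    IntervalIntegrable (fun s => countingFun μ s / s) volume a b :=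
  (hsupp.integrableOn_countingFun_div _ _).intervalIntegrable

end Counting

/-- Tonelli on the region `{s, t > 0, t s ≤ r}`. -/
lemma lintegral_measure_Ioc_div_mul (μ ν : Measure ℝ) [SFinite μ] [SFinite ν]
    {f : ℝ → ℝ≥0∞} (hf : Measurable f) (r : ℝ) :
    ∫⁻ s in Ioi 0, ν (Ioc 0 (r / s)) * f s ∂μ
      = ∫⁻ t in Ioi 0, ∫⁻ s in Ioc 0 (r / t), f s ∂μ ∂ν := by
  set H : ℝ → ℝ → ℝ≥0∞ := fun s t => if t * s ≤ r then f s else 0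
  have hH : Measurable (Function.uncurry H) :=
    Measurable.ite (measurableSet_le (measurable_snd.mul measurable_fst) measurable_const)
      (hf.comp measurable_fst) measurable_const
  have hindicator {s t : ℝ} (hs : 0 < s) (ht : 0 < t) :
      (Ioc 0 (r / s)).indicator (fun _ => f s) t = H s t ∧
        (Ioc 0 (r / t)).indicator f s = H s t := by
    simp only [H, indicator, mem_Ioc, hs, ht, true_and, le_div_iff₀ hs, le_div_iff₀ ht,
      mul_comm s t, and_self]
  calc ∫⁻ s in Ioi 0, ν (Ioc 0 (r / s)) * f s ∂μ
      = ∫⁻ s in Ioi 0, ∫⁻ t in Ioi 0, H s t ∂ν ∂μ := by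
        refine setLIntegral_congr_fun measurableSet_Ioi fun s (hs : 0 < s) => ?_
        rw [← setLIntegral_congr_fun measurableSet_Ioi fun t (ht : 0 < t) =>
            (hindicator hs ht).1, lintegral_indicator_const measurableSet_Ioc,
          Measure.restrict_apply measurableSet_Ioc, inter_eq_left.2 Ioc_subset_Ioi_self, mul_comm]
    _ = ∫⁻ t in Ioi 0, ∫⁻ s in Ioi 0, H s t ∂μ ∂ν := lintegral_lintegral_swap hH.aemeasurable
    _ = ∫⁻ t in Ioi 0, ∫⁻ s in Ioc 0 (r / t), f s ∂μ ∂ν := by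
        refine setLIntegral_congr_fun measurableSet_Ioi fun t (ht : 0 < t) => ?_
        rw [← setLIntegral_congr_fun measurableSet_Ioi fun s (hs : 0 < s) =>
            (hindicator hs ht).2, lintegral_indicator measurableSet_Ioc,
          Measure.restrict_restrict measurableSet_Ioc, inter_eq_left.2 Ioc_subset_Ioi_self]

lemma StieltjesFunction.setIntegral_apply_div_mul (G : StieltjesFunction ℝ) (hG0 : G 0 = 0)
    {f : ℝ → ℝ} (hf : Measurable f) (hf0 : ∀ s > 0, 0 ≤ f s)
    (hf_int : ∀ a b, IntervalIntegrable f volume a b) {r : ℝ} (hr : 0 ≤ r) :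
    ∫ t in Ioi 0, G (r / t) * f t = ∫ t in Ioi 0, (∫ s in 0..r / t, f s) ∂G.measure := by
  have hrt : ∀ t ∈ Ioi (0 : ℝ), 0 ≤ r / t := fun t ht => div_nonneg hr (le_of_lt ht)
  have hG_nonneg : ∀ t ∈ Ioi (0 : ℝ), 0 ≤ G (r / t) := fun t ht => hG0 ▸ G.mono (hrt t ht)
  have hf_ae : ∀ x, 0 ≤ᵐ[volume.restrict (Ioc 0 x)] f := fun x =>
    (ae_restrict_iff' measurableSet_Ioc).2 (ae_of_all _ fun s hs => hf0 s hs.1)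
  have hprimitive : ∀ t ∈ Ioi (0 : ℝ),
      ∫ s in 0..r / t, f s = ∫ s in Ioc 0 (r / t), f s := fun t ht =>
    intervalIntegral.integral_of_le (hrt t ht)
  rw [integral_eq_lintegral_of_nonneg_ae, integral_eq_lintegral_of_nonneg_ae]
  · congr 1
    calc ∫⁻ t in Ioi 0, ENNReal.ofReal (G (r / t) * f t)
        = ∫⁻ t in Ioi 0, G.measure (Ioc 0 (r / t)) * ENNReal.ofReal (f t) :=
          setLIntegral_congr_fun _root_.measurableSet_Ioi fun t ht => by
            rw [G.measure_Ioc, hG0, sub_zero, ENNReal.ofReal_mul (hG_nonneg t ht)]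
      _ = ∫⁻ t in Ioi 0, ∫⁻ s in Ioc 0 (r / t), ENNReal.ofReal (f s) ∂volume ∂G.measure :=
          lintegral_measure_Ioc_div_mul _ _ hf.ennreal_ofReal r
      _ = ∫⁻ t in Ioi 0, ENNReal.ofReal (∫ s in 0..r / t, f s) ∂G.measure :=
          setLIntegral_congr_fun _root_.measurableSet_Ioi fun t ht => by
            rw [hprimitive t ht, ofReal_integral_eq_lintegral_ofReal
              ((intervalIntegrable_iff_integrableOn_Ioc_of_le (hrt t ht)).1 (hf_int _ _)) (hf_ae _)]
  · refine (ae_restrict_iff' _root_.measurableSet_Ioi).2 (ae_of_all _ fun t ht => ?_)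
    show 0 ≤ ∫ s in 0..r / t, f s
    rw [hprimitive t ht]
    exact setIntegral_nonneg measurableSet_Ioc fun s hs => hf0 s hs.1
  · exact ((intervalIntegral.continuous_primitive hf_int 0).measurable.comp
      (measurable_const.div measurable_id)).aestronglyMeasurable
  · exact (ae_restrict_iff' _root_.measurableSet_Ioi).2 (ae_of_all _ fun t (ht : 0 < t) =>
      mul_nonneg (hG_nonneg t ht) (hf0 t ht))
  · exact ((G.mono.measurable.comp (measurable_const.div measurable_id)).mul
      hf).aestronglyMeasurable

/-- `dN_μ` is encoded by its density `μ^rad(t)/t` on `(0, ∞)`, and `d(t 𝓜_q'(t))` by the measure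
of a Stieltjes function `G` agreeing with `t 𝓜_q'(t)` on `(0, ∞)`. -/
theorem valiron_stmt4_general (ρ : ℝ) (q : ℕ)
    (μ : Measure ℂ) (hsupp : SuppAvoidsZero μ) (hft : HasFiniteType μ ρ)
    (G : StieltjesFunction ℝ) (hG : ∀ t > (0:ℝ), G t = t * maxKernelDeriv q t)
    (r : ℝ) (hr : 0 ≤ r) :
    ∫ t in Set.Ioi (0:ℝ),
        (r / t) * maxKernelDeriv q (r / t) * (countingFun μ t / t) =
      ∫ t in Set.Ioi (0:ℝ), avgCountingFun μ (r / t) ∂G.measure := by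
  have := hft.isFiniteMeasureOnCompacts
  have hG0 : G 0 = 0 := G.apply_zero_of_eq_mul_maxKernelDeriv hG
  calc _ = ∫ t in Ioi 0, G (r / t) * (countingFun μ t / t) :=
        setIntegral_congr_fun measurableSet_Ioi fun t (ht : 0 < t) => by
          rcases (div_nonneg hr ht.le).eq_or_lt with h | h
          · rw [← h, zero_mul, hG0]
          · rw [hG _ h]
    _ = _ := G.setIntegral_apply_div_mul hG0 (monotone_countingFun.measurable.div measurable_id)
        (fun s hs => div_nonneg (countingFun_nonneg μ s) hs.le)
        hsupp.intervalIntegrable_countingFun_div hr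

/-- For `ρ > 0`, `q = ⌊ρ⌋`, and a positive Borel measure `μ` on `ℂ`
whose support avoids `0` and whose counting function has finite type at order `ρ`,
for every `r ≥ 0` one has
`∫_0^∞ (r/t) 𝓜_q'(r/t) dN_μ(t) = ∫_0^∞ N_μ(r/t) d(t 𝓜_q'(t))`.
The left-hand side is the Lebesgue–Stieltjes integral with respect to `N_μ`
(whose Stieltjes measure has density `μ^rad(t)/t` on `(0,∞)`); the right-hand side is
the Lebesgue–Stieltjes integral with respect to the increasing function `t ↦ t 𝓜_q'(t)`,
formalized via any Stieltjes function `G` that agrees with it on `(0,∞)`. -/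
theorem valiron_stmt4 (ρ : ℝ) (hρ : 0 < ρ) (q : ℕ) (hq : q = ⌊ρ⌋₊)
    (μ : Measure ℂ) (hsupp : SuppAvoidsZero μ) (hft : HasFiniteType μ ρ)
    (G : StieltjesFunction ℝ) (hG : ∀ t > (0:ℝ), G t = t * maxKernelDeriv q t)
    (r : ℝ) (hr : 0 ≤ r) :
    ∫ t in Set.Ioi (0:ℝ),
        (r / t) * maxKernelDeriv q (r / t) * (countingFun μ t / t) =
      ∫ t in Set.Ioi (0:ℝ), avgCountingFun μ (r / t) ∂G.measure :=
  valiron_stmt4_general ρ q μ hsupp hft G hG r hr
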